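/- arXiv:2108.10558 — 5 statements merged into one kernel-verified Lean document; each statement's English description precedes it below -/
import Mathlib

section
/- A map of event structures locally reflects causal dependency: if f : E → E' is a map, x is a configuration of E, e, e' ∈ x, f(e) and f(e') are both defined, and f(e') ≤ f(e) in E', then e' ≤ e in E. -/
/-- An event structure `(E, ≤, Con)`: a finitary partial order of causal
dependency together with a nonempty consistency relation of finite subsets. -/
structure ES (E : Type) where
  le : E → E → Prop
  le_refl : ∀ e, le e e
  le_trans : ∀ a b c, le a b → le b c → le a c
  le_antisymm : ∀ a b, le a b → le b a → a = b
  finitary : ∀ e, {e' | le e' e}.Finite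
  Con : Set (Set E)
  con_finite : ∀ X ∈ Con, X.Finite
  con_nonempty : Con.Nonempty
  con_singleton : ∀ e : E, {e} ∈ Con
  con_mono : ∀ X Y : Set E, Y ⊆ X → X ∈ Con → Y ∈ Con
  con_extend : ∀ (X : Set E) (e e' : E), X ∈ Con → e' ∈ X → le e e' → insert e X ∈ Con

/-- A configuration: a consistent, down-closed subset of events. -/
def ES.IsConfig {E : Type} (S : ES E) (x : Set E) : Prop :=
  (∀ X : Set E, X ⊆ x → X.Finite → X ∈ S.Con) ∧
  (∀ e e', S.le e' e → e ∈ x → e' ∈ x)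

/-- Direct image of a set under a partial function. -/
def pimage {E E' : Type} (f : E → Option E') (x : Set E) : Set E' :=
  {e' | ∃ e ∈ x, f e = some e'}

/-- A (partial) map of event structures: direct images of configurations are
configurations, and the map is locally injective on configurations. -/
def IsMap {E E' : Type} (S : ES E) (S' : ES E') (f : E → Option E') : Prop :=
  (∀ x : Set E, S.IsConfig x → S'.IsConfig (pimage f x)) ∧
  (∀ x : Set E, S.IsConfig x → ∀ e₁ ∈ x, ∀ e₂ ∈ x, ∀ e',
      f e₁ = some e' → f e₂ = some e' → e₁ = e₂)

/-- A total map of event structures, as a total function. -/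
def IsTotalMap {E E' : Type} (S : ES E) (S' : ES E') (f : E → E') : Prop :=
  (∀ x : Set E, S.IsConfig x → S'.IsConfig (f '' x)) ∧
  (∀ x : Set E, S.IsConfig x → Set.InjOn f x)

/-- a map of event structures locally reflects causal dependency. -/
theorem stmt2 {E E' : Type} (S : ES E) (S' : ES E') (f : E → Option E')
    (hf : IsMap S S' f) (x : Set E) (hx : S.IsConfig x)
    (e e' : E) (he : e ∈ x) (he' : e' ∈ x)
    (a a' : E') (hfe : f e = some a) (hfe' : f e' = some a')
    (hle : S'.le a' a) :
    S.le e' e := by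
  set y : Set E := {d ∈ x | S.le d e} with hy
  have hyx : y ⊆ x := fun d hd => hd.1
  have hycfg : S.IsConfig y := by
    constructor
    · exact fun X hX hXf => hx.1 X (hX.trans hyx) hXf
    · rintro d d' hdd' ⟨hdx, hde⟩
      exact ⟨hx.2 d d' hdd' hdx, S.le_trans _ _ _ hdd' hde⟩
  have hcfg' : S'.IsConfig (pimage f y) := hf.1 y hycfg
  have ha : a ∈ pimage f y := ⟨e, ⟨he, S.le_refl e⟩, hfe⟩
  have ha' : a' ∈ pimage f y := hcfg'.2 a a' hle ha
  obtain ⟨d, hd, hfd⟩ := ha'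
  have : d = e' := hf.2 x hx d (hyx hd) e' he' a' hfd hfe'
  exact this ▸ hd.2
end

section
/- In the copycat event structure CC_A, the relation obtained as the transitive closure of ≤ on A⊥ ∥ A together with the pairs (c̄, c) for c of positive polarity in A⊥ ∥ A is a finitary partial order (i.e., each event has only finitely many events below it and the relation is antisymmetric). -/
/-- The "other copy" involution on the events of `A⊥ ∥ A`. -/
def bar {A : Type} : A ⊕ A → A ⊕ A := Sum.elim Sum.inr Sum.inl

/-- Polarity on `A⊥ ∥ A` for a game with polarity `pol : A → Bool`
(`true` = Player): reversed on the left copy. -/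
def ccPol {A : Type} (pol : A → Bool) : A ⊕ A → Bool :=
  Sum.elim (fun a => !pol a) pol

/-- Componentwise causal dependency of `A⊥ ∥ A`. -/
def parLe2 {A : Type} (S : ES A) : A ⊕ A → A ⊕ A → Prop :=
  fun s t =>
    (∃ a a', s = Sum.inl a ∧ t = Sum.inl a' ∧ S.le a a') ∨
    (∃ a a', s = Sum.inr a ∧ t = Sum.inr a' ∧ S.le a a')

/-- One-step generating relation of the copycat order: the order of `A⊥ ∥ A`
together with the pairs `(c̄, c)` for `c` of positive polarity. -/
def ccStep {A : Type} (S : ES A) (pol : A → Bool) : A ⊕ A → A ⊕ A → Prop :=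
  fun s t => parLe2 S s t ∨ (s = bar t ∧ ccPol pol t = true)

/-- The copycat causal order: the (reflexive-)transitive closure. -/
def ccLe {A : Type} (S : ES A) (pol : A → Bool) : A ⊕ A → A ⊕ A → Prop :=
  Relation.ReflTransGen (ccStep S pol)


/-- Underlying event. -/
def uu {A : Type} : A ⊕ A → A := Sum.elim id id

lemma ccStep_mono {A : Type} (S : ES A) (pol : A → Bool) {s t : A ⊕ A}
    (h : ccStep S pol s t) : S.le (uu s) (uu t) := by
  rcases h with (⟨a, a', hs, ht, hle⟩ | ⟨a, a', hs, ht, hle⟩) | ⟨hb, _⟩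
  · subst hs; subst ht; exact hle
  · subst hs; subst ht; exact hle
  · subst hb; cases t <;> exact S.le_refl _

lemma ccLe_mono {A : Type} (S : ES A) (pol : A → Bool) {s t : A ⊕ A}
    (h : ccLe S pol s t) : S.le (uu s) (uu t) := by
  induction h with
  | refl => exact S.le_refl _
  | tail _ h2 ih => exact S.le_trans _ _ _ ih (ccStep_mono S pol h2)

lemma ccLe_cross {A : Type} (S : ES A) (pol : A → Bool) {c d : A ⊕ A}
    (h : ccLe S pol c d) (he : uu c = uu d) :
    c = d ∨ (c = Sum.inl (uu c) ∧ d = Sum.inr (uu c) ∧ pol (uu c) = true)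
      ∨ (c = Sum.inr (uu c) ∧ d = Sum.inl (uu c) ∧ pol (uu c) = false) := by
  induction h using Relation.ReflTransGen.head_induction_on with
  | refl => exact Or.inl rfl
  | head h' hrest ih =>
    rename_i c x
    have hcx : uu c = uu x := by
      apply S.le_antisymm _ _ (ccStep_mono S pol h')
      have := ccLe_mono S pol hrest
      rw [← he] at this; exact this
    rcases h' with (⟨a, a', hs, ht, hle⟩ | ⟨a, a', hs, ht, hle⟩) | ⟨hb, hp⟩
    · subst hs; subst ht
      have : a = a' := hcx
      subst this
      exact ih (by rw [← he])
    · subst hs; subst ht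
      have : a = a' := hcx
      subst this
      exact ih (by rw [← he])
    · subst hb
      cases x with
      | inl a =>
        -- c = bar (inl a) = inr a, ccPol pol (inl a) = !pol a = true
        have hp' : pol a = false := by simpa [ccPol] using hp
        rcases ih (by rw [← he]; rfl) with h1 | ⟨h1, h2, h3⟩ | ⟨h1, h2, h3⟩
        · rw [← h1]
          exact Or.inr (Or.inr ⟨rfl, rfl, hp'⟩)
        · exact Or.inl h2.symm
        · exact absurd h1 (by simp [uu])
      | inr a =>
        -- c = bar (inr a) = inl a, ccPol pol (inr a) = pol a = true
        have hp' : pol a = true := by simpa [ccPol] using hp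
        rcases ih (by rw [← he]; rfl) with h1 | ⟨h1, h2, h3⟩ | ⟨h1, h2, h3⟩
        · rw [← h1]
          exact Or.inr (Or.inl ⟨rfl, rfl, hp'⟩)
        · exact absurd h1 (by simp [uu])
        · exact Or.inl h2.symm

/-- the copycat order on `CC_A` — the transitive closure of the
order of `A⊥ ∥ A` together with the pairs `(c̄, c)` for positive `c` — is a
finitary partial order: each event has only finitely many events below it, and
the relation is antisymmetric. -/
theorem stmt9 {A : Type} (S : ES A) (pol : A → Bool) :
    (∀ c : A ⊕ A, {c' | ccLe S pol c' c}.Finite) ∧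
    (∀ c d : A ⊕ A, ccLe S pol c d → ccLe S pol d c → c = d) := by
  constructor
  · intro c
    apply Set.Finite.subset
      (Set.Finite.union ((S.finitary (uu c)).image Sum.inl)
        ((S.finitary (uu c)).image Sum.inr))
    intro c' hc'
    have h := ccLe_mono S pol hc'
    cases c' with
    | inl a => exact Or.inl ⟨a, h, rfl⟩
    | inr a => exact Or.inr ⟨a, h, rfl⟩
  · intro c d h1 h2
    have he : uu c = uu d :=
      S.le_antisymm _ _ (ccLe_mono S pol h1) (ccLe_mono S pol h2)
    rcases ccLe_cross S pol h1 he with h | ⟨hc1, hd1, hp1⟩ | ⟨hc1, hd1, hp1⟩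
    · exact h
    · rcases ccLe_cross S pol h2 he.symm with h | ⟨hd2, hc2, hp2⟩ | ⟨hd2, hc2, hp2⟩
      · exact h.symm
      · exact absurd (hc1.symm.trans hc2) (by rw [he]; simp)
      · exact absurd ((he ▸ hp1 : pol (uu d) = true).symm.trans hp2) (by simp)
    · rcases ccLe_cross S pol h2 he.symm with h | ⟨hd2, hc2, hp2⟩ | ⟨hd2, hc2, hp2⟩
      · exact h.symm
      · exact absurd ((he ▸ hp1 : pol (uu d) = false).symm.trans hp2) (by simp)
      · exact absurd (hc1.symm.trans hc2) (by rw [he]; simp)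
end

section
/- The configurations of the copycat event structure CC_A are exactly the sets x ∥ y with x, y configurations of A such that y ⊑_A x, where y ⊑_A x means y ⊇⁻ x ∩ y ⊆⁺ x (all events of y \ (x∩y) are negative and all events of x \ (x∩y) are positive). -/
/-- Configurations of the copycat event structure `CC_A`: sets down-closed
w.r.t. the copycat order whose finite subsets have consistent down-closures in
`A⊥ ∥ A`, i.e. both components consistent in `A`. -/
def CCConfig {A : Type} (S : ES A) (pol : A → Bool) (z : Set (A ⊕ A)) : Prop :=
  (∀ e e' : A ⊕ A, ccLe S pol e' e → e ∈ z → e' ∈ z) ∧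
  (∀ X : Set A, X ⊆ {a | Sum.inl a ∈ z} → X.Finite → X ∈ S.Con) ∧
  (∀ X : Set A, X ⊆ {a | Sum.inr a ∈ z} → X.Finite → X ∈ S.Con)

/-- The Scott order on configurations: `y ⊑ x` iff `y ⊇⁻ x ∩ y ⊆⁺ x`, i.e.
all events of `y \ x` are negative and all events of `x \ y` are positive. -/
def ScottLe {A : Type} (pol : A → Bool) (y x : Set A) : Prop :=
  (∀ e ∈ y \ x, pol e = false) ∧ (∀ e ∈ x \ y, pol e = true)


/-- the configurations of the copycat event structure `CC_A`
are exactly the sets `x ∥ y` for configurations `x, y` of `A` with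
`y ⊑_A x` in the Scott order. -/
theorem stmt10 {A : Type} (S : ES A) (pol : A → Bool) (z : Set (A ⊕ A)) :
    CCConfig S pol z ↔
    ∃ x y : Set A, S.IsConfig x ∧ S.IsConfig y ∧
      z = Sum.inl '' x ∪ Sum.inr '' y ∧ ScottLe pol y x := by
  constructor
  · rintro ⟨hdc, hconl, hconr⟩
    refine ⟨{a | Sum.inl a ∈ z}, {a | Sum.inr a ∈ z}, ⟨hconl, ?_⟩, ⟨hconr, ?_⟩, ?_, ?_, ?_⟩
    · intro e e' hle he
      exact hdc _ _ (Relation.ReflTransGen.single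
        (Or.inl (Or.inl ⟨e', e, rfl, rfl, hle⟩))) he
    · intro e e' hle he
      exact hdc _ _ (Relation.ReflTransGen.single
        (Or.inl (Or.inr ⟨e', e, rfl, rfl, hle⟩))) he
    · ext s
      cases s with
      | inl a => simp [Set.mem_image]
      | inr a => simp [Set.mem_image]
    · rintro e ⟨he, hne⟩
      by_contra h
      have hpos : pol e = true := by revert h; cases pol e <;> simp
      exact hne (hdc (Sum.inr e) (Sum.inl e) (Relation.ReflTransGen.single
        (Or.inr ⟨rfl, by simpa [ccPol] using hpos⟩)) he)
    · rintro e ⟨he, hne⟩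
      by_contra h
      have hneg : pol e = false := by revert h; cases pol e <;> simp
      exact hne (hdc (Sum.inl e) (Sum.inr e) (Relation.ReflTransGen.single
        (Or.inr ⟨rfl, by simp [ccPol, hneg]⟩)) he)
  · rintro ⟨x, y, ⟨hxcon, hxdc⟩, ⟨hycon, hydc⟩, rfl, hneg, hpos⟩
    have step : ∀ e ∈ Sum.inl '' x ∪ Sum.inr '' y, ∀ e',
        ccStep S pol e' e → e' ∈ Sum.inl '' x ∪ Sum.inr '' y := by
      rintro e he e' (h | ⟨hb, hp⟩)
      · rcases h with ⟨a, a', rfl, rfl, hle⟩ | ⟨a, a', rfl, rfl, hle⟩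
        · rcases he with ⟨b, hb, hbe⟩ | ⟨b, hb, hbe⟩
          · simp only [Sum.inl.injEq] at hbe; subst hbe
            exact Or.inl ⟨a, hxdc _ _ hle hb, rfl⟩
          · exact absurd hbe (by simp)
        · rcases he with ⟨b, hb, hbe⟩ | ⟨b, hb, hbe⟩
          · exact absurd hbe (by simp)
          · simp only [Sum.inr.injEq] at hbe; subst hbe
            exact Or.inr ⟨a, hydc _ _ hle hb, rfl⟩
      · subst hb
        cases e with
        | inl a =>
          have ha : a ∈ x := by
            rcases he with ⟨b, hb, hbe⟩ | ⟨b, hb, hbe⟩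
            · simpa using (Sum.inl.injEq .. ▸ hbe) ▸ hb
            · exact absurd hbe (by simp)
          have hap : pol a = false := by simpa [ccPol] using hp
          have hay : a ∈ y := by
            by_contra hay
            have := hpos a ⟨ha, hay⟩
            simp [this] at hap
          exact Or.inr ⟨a, hay, rfl⟩
        | inr a =>
          have ha : a ∈ y := by
            rcases he with ⟨b, hb, hbe⟩ | ⟨b, hb, hbe⟩
            · exact absurd hbe (by simp)
            · simpa using (Sum.inr.injEq .. ▸ hbe) ▸ hb
          have hap : pol a = true := by simpa [ccPol] using hp
          have hax : a ∈ x := by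
            by_contra hax
            have := hneg a ⟨ha, hax⟩
            simp [this] at hap
          exact Or.inl ⟨a, hax, rfl⟩
    refine ⟨?_, ?_, ?_⟩
    · intro e e' hle he
      induction hle with
      | refl => exact he
      | tail _ h2 ih => exact ih (step _ he _ h2)
    · intro X hX hXf
      refine hxcon X ?_ hXf
      intro a ha
      rcases hX ha with ⟨b, hb, hbe⟩ | ⟨b, hb, hbe⟩
      · simpa using (Sum.inl.injEq .. ▸ hbe) ▸ hb
      · exact absurd hbe (by simp)
    · intro X hX hXf
      refine hycon X ?_ hXf
      intro a ha
      rcases hX ha with ⟨b, hb, hbe⟩ | ⟨b, hb, hbe⟩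
      · exact absurd hbe (by simp)
      · simpa using (Sum.inr.injEq .. ▸ hbe) ▸ hb
end

section
/- If A is a race-free event structure with polarity, then the copycat event structure CC_A is deterministic; conversely, if CC_A is deterministic then A is race-free. -/
/-- A game is race-free: whenever `x ⊆⁺ y` and `x ⊆⁻ z` for configurations,
`y ∪ z` is a configuration. -/
def RaceFree {A : Type} (S : ES A) (pol : A → Bool) : Prop :=
  ∀ x y z : Set A, S.IsConfig x → S.IsConfig y → S.IsConfig z →
    x ⊆ y → (∀ e ∈ y \ x, pol e = true) →
    x ⊆ z → (∀ e ∈ z \ x, pol e = false) →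
    S.IsConfig (y ∪ z)

/-- The copycat event structure is deterministic: whenever `x ⊆⁺ y` and
`x ⊆ z` for copycat configurations, `y ∪ z` is again a configuration. -/
def CCDeterministic {A : Type} (S : ES A) (pol : A → Bool) : Prop :=
  ∀ x y z : Set (A ⊕ A), CCConfig S pol x → CCConfig S pol y → CCConfig S pol z →
    x ⊆ y → (∀ e ∈ y \ x, ccPol pol e = true) →
    x ⊆ z →
    CCConfig S pol (y ∪ z)

namespace Stmt12Aux

variable {A : Type}

def elem : A ⊕ A → A := Sum.elim id id

lemma bar_bar (e : A ⊕ A) : bar (bar e) = e := by cases e <;> rfl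

lemma ccPol_bar (pol : A → Bool) (e : A ⊕ A) : ccPol pol (bar e) = !ccPol pol e := by
  cases e <;> simp [bar, ccPol]

lemma elem_bar (e : A ⊕ A) : elem (bar e) = elem e := by cases e <;> rfl

lemma step_le (S : ES A) (pol : A → Bool) {s t : A ⊕ A} (h : ccStep S pol s t) :
    S.le (elem s) (elem t) := by
  rcases h with (⟨a,a',rfl,rfl,h⟩|⟨a,a',rfl,rfl,h⟩) | ⟨rfl, _⟩
  · exact h
  · exact h
  · rw [elem_bar]; exact S.le_refl _

lemma ccLe_le (S : ES A) (pol : A → Bool) {s t : A ⊕ A} (h : ccLe S pol s t) :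
    S.le (elem s) (elem t) := by
  induction h with
  | refl => exact S.le_refl _
  | tail _ hstep ih => exact S.le_trans _ _ _ ih (step_le S pol hstep)

lemma ccLe_inl (S : ES A) (pol : A → Bool) {a b : A} (h : S.le a b) :
    ccLe S pol (Sum.inl a) (Sum.inl b) :=
  Relation.ReflTransGen.single (Or.inl (Or.inl ⟨a,b,rfl,rfl,h⟩))

lemma ccLe_inr (S : ES A) (pol : A → Bool) {a b : A} (h : S.le a b) :
    ccLe S pol (Sum.inr a) (Sum.inr b) :=
  Relation.ReflTransGen.single (Or.inl (Or.inr ⟨a,b,rfl,rfl,h⟩))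

lemma ccLe_bar (S : ES A) (pol : A → Bool) {e : A ⊕ A} (h : ccPol pol e = true) :
    ccLe S pol (bar e) e :=
  Relation.ReflTransGen.single (Or.inr ⟨rfl, h⟩)

lemma ccLe_eq_cases (S : ES A) (pol : A → Bool) {s t : A ⊕ A}
    (h : ccLe S pol s t) (he : elem s = elem t) :
    s = t ∨ (s = bar t ∧ ccPol pol t = true) := by
  induction h using Relation.ReflTransGen.head_induction_on with
  | refl => exact Or.inl rfl
  | head hstep htail ih =>
    rename_i s' b
    have hb : elem b = elem t := by
      apply S.le_antisymm
      · exact ccLe_le S pol htail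
      · rw [← he]; exact step_le S pol hstep
    have hsb : elem s' = elem b := by rw [hb, he]
    rcases hstep with (⟨a,a',h1,h2,hle⟩|⟨a,a',h1,h2,hle⟩) | ⟨hbar, hp⟩
    · have : a = a' := by
        subst h1 h2; simpa [elem] using hsb
      subst this h1 h2
      exact ih hb
    · have : a = a' := by
        subst h1 h2; simpa [elem] using hsb
      subst this h1 h2
      exact ih hb
    · subst hbar
      rcases ih hb with rfl | ⟨hbt, hpt⟩
      · exact Or.inr ⟨rfl, hp⟩
      · rw [hbt, bar_bar]
        exact Or.inl rfl

lemma ccLe_antisymm (S : ES A) (pol : A → Bool) {s t : A ⊕ A}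
    (h1 : ccLe S pol s t) (h2 : ccLe S pol t s) : s = t := by
  have he : elem s = elem t :=
    S.le_antisymm _ _ (ccLe_le S pol h1) (ccLe_le S pol h2)
  rcases ccLe_eq_cases S pol h1 he with rfl | ⟨hb1, hp1⟩
  · rfl
  rcases ccLe_eq_cases S pol h2 he.symm with rfl | ⟨hb2, hp2⟩
  · rfl
  exfalso
  rw [hb1, ccPol_bar, hp1] at hp2
  simp at hp2

lemma ccLe_preds_finite (S : ES A) (pol : A → Bool) (e : A ⊕ A) :
    {e' | ccLe S pol e' e}.Finite := by
  apply Set.Finite.subset (((S.finitary (elem e)).image Sum.inl).union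
    ((S.finitary (elem e)).image Sum.inr))
  intro e' he'
  have hle := ccLe_le S pol he'
  cases e' with
  | inl a => exact Or.inl ⟨a, hle, rfl⟩
  | inr a => exact Or.inr ⟨a, hle, rfl⟩

end Stmt12Aux
namespace Stmt12Aux

variable {A : Type} {S : ES A} {pol : A → Bool}

def comp1 (z : Set (A ⊕ A)) : Set A := {a | Sum.inl a ∈ z}
def comp2 (z : Set (A ⊕ A)) : Set A := {a | Sum.inr a ∈ z}

lemma comp1_config {z : Set (A ⊕ A)} (h : CCConfig S pol z) : S.IsConfig (comp1 z) :=
  ⟨h.2.1, fun a b hle ha => h.1 _ _ (ccLe_inl S pol hle) ha⟩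

lemma comp2_config {z : Set (A ⊕ A)} (h : CCConfig S pol z) : S.IsConfig (comp2 z) :=
  ⟨h.2.2, fun a b hle ha => h.1 _ _ (ccLe_inr S pol hle) ha⟩

lemma cross1 {z : Set (A ⊕ A)} (h : CCConfig S pol z) {a : A}
    (ha : a ∈ comp1 z) (hp : pol a = false) : a ∈ comp2 z := by
  have : ccLe S pol (Sum.inr a) (Sum.inl a) := by
    have := ccLe_bar S pol (e := Sum.inl a) (by simp [ccPol, hp])
    simpa [bar] using this
  exact h.1 _ _ this ha

lemma cross2 {z : Set (A ⊕ A)} (h : CCConfig S pol z) {a : A}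
    (ha : a ∈ comp2 z) (hp : pol a = true) : a ∈ comp1 z := by
  have : ccLe S pol (Sum.inl a) (Sum.inr a) := by
    have := ccLe_bar S pol (e := Sum.inr a) (by simp [ccPol, hp])
    simpa [bar] using this
  exact h.1 _ _ this ha

/-- A down-closed subset of a copycat configuration is a copycat configuration. -/
lemma CCsubset {z w : Set (A ⊕ A)} (hz : CCConfig S pol z) (hw : w ⊆ z)
    (hdc : ∀ u v : A ⊕ A, ccLe S pol u v → v ∈ w → u ∈ w) : CCConfig S pol w := by
  refine ⟨fun e e' hle he => hdc e' e hle he, ?_, ?_⟩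
  · intro X hX hXf
    exact hz.2.1 X (fun a ha => hw (hX ha)) hXf
  · intro X hX hXf
    exact hz.2.2 X (fun a ha => hw (hX ha)) hXf

/-- Build a copycat configuration from two components. -/
lemma mkCC {x1 x2 : Set A} (h1 : S.IsConfig x1) (h2 : S.IsConfig x2)
    (c1 : ∀ a ∈ x1, pol a = false → a ∈ x2) (c2 : ∀ a ∈ x2, pol a = true → a ∈ x1) :
    CCConfig S pol {e | Sum.elim (· ∈ x1) (· ∈ x2) e} := by
  refine ⟨?_, ?_, ?_⟩
  · intro e e' hle he
    induction hle using Relation.ReflTransGen.head_induction_on with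
    | refl => exact he
    | head hstep _ ih =>
      rename_i c _
      have hb := ih
      rcases hstep with (⟨a,a',rfl,rfl,hle'⟩|⟨a,a',rfl,rfl,hle'⟩) | ⟨hbar, hp⟩
      · exact h1.2 _ _ hle' hb
      · exact h2.2 _ _ hle' hb
      · subst hbar
        cases c with
        | inl a =>
          have hp' : pol a = false := by simpa [ccPol] using hp
          exact c1 a hb hp'
        | inr a =>
          have hp' : pol a = true := by simpa [ccPol] using hp
          exact c2 a hb hp'
  · intro X hX hXf
    exact h1.1 X (fun a ha => hX ha) hXf
  · intro X hX hXf
    exact h2.1 X (fun a ha => hX ha) hXf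

/-- Intersection of configurations is a configuration. -/
lemma inter_config {x y : Set A} (hx : S.IsConfig x) (hy : S.IsConfig y) :
    S.IsConfig (x ∩ y) :=
  ⟨fun X hX hXf => hx.1 X (fun a ha => (hX ha).1) hXf,
   fun e e' hle he => ⟨hx.2 e e' hle he.1, hy.2 e e' hle he.2⟩⟩

end Stmt12Aux
namespace Stmt12Aux

variable {A : Type} {S : ES A} {pol : A → Bool}

lemma exists_max_finset {α : Type} (r : α → α → Prop)
    (htr : ∀ a b c, r a b → r b c → r a c)
    (hanti : ∀ a b, r a b → r b a → a = b) (s : Finset α) :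
    s.Nonempty → ∃ e ∈ s, ∀ e' ∈ s, r e e' → e = e' := by
  classical
  induction s using Finset.induction_on with
  | empty => intro h; simp at h
  | @insert a t hat ih =>
    intro _
    rcases t.eq_empty_or_nonempty with rfl | hne
    · exact ⟨a, by simp, by simp⟩
    · obtain ⟨m, hm, hmax⟩ := ih hne
      by_cases hr : r m a
      · refine ⟨a, by simp, ?_⟩
        intro e' he' hae'
        rcases Finset.mem_insert.mp he' with rfl | he't
        · rfl
        · obtain rfl := hmax e' he't (htr m a e' hr hae')
          exact hanti a m hae' hr
      · refine ⟨m, Finset.mem_insert_of_mem hm, ?_⟩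
        intro e' he' hme'
        rcases Finset.mem_insert.mp he' with rfl | he't
        · exact absurd hme' hr
        · exact hmax e' he't hme'

lemma exists_max {α : Type} (r : α → α → Prop)
    (htr : ∀ a b c, r a b → r b c → r a c)
    (hanti : ∀ a b, r a b → r b a → a = b) (s : Set α) (hf : s.Finite)
    (hne : s.Nonempty) : ∃ e ∈ s, ∀ e' ∈ s, r e e' → e = e' := by
  obtain ⟨e, he, hmax⟩ := exists_max_finset r htr hanti hf.toFinset
    (by simpa [Set.Finite.toFinset_nonempty] using hne)
  exact ⟨e, hf.mem_toFinset.mp he, fun e' he' => hmax e' (hf.mem_toFinset.mpr he')⟩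

lemma det_to_racefree (h : CCDeterministic S pol) : RaceFree S pol := by
  intro x y z hx hy hz hxy hypos hxz hzneg
  have hxy' : ∀ a ∈ y, pol a = false → a ∈ x := by
    intro a ha hp
    by_contra hax
    have := hypos a ⟨ha, hax⟩
    simp [hp] at this
  have hxz' : ∀ a ∈ z, pol a = true → a ∈ x := by
    intro a ha hp
    by_contra hax
    have := hzneg a ⟨ha, hax⟩
    simp [hp] at this
  have hYX : CCConfig S pol {e | Sum.elim (· ∈ y) (· ∈ x) e} :=
    mkCC hy hx (fun a ha hp => hxz (hxy' a ha hp) |> fun _ => hxy' a ha hp)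
      (fun a ha _ => hxy ha)
  have hYY : CCConfig S pol {e | Sum.elim (· ∈ y) (· ∈ y) e} :=
    mkCC hy hy (fun a ha _ => ha) (fun a ha _ => ha)
  have hYZ : CCConfig S pol {e | Sum.elim (· ∈ y) (· ∈ z) e} :=
    mkCC hy hz (fun a ha hp => hxz (hxy' a ha hp))
      (fun a ha hp => hxy (hxz' a ha hp))
  have hsub1 : {e : A ⊕ A | Sum.elim (· ∈ y) (· ∈ x) e} ⊆ {e | Sum.elim (· ∈ y) (· ∈ y) e} := by
    intro e he; cases e with
    | inl a => exact he
    | inr a => exact hxy he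
  have hpos1 : ∀ e ∈ {e : A ⊕ A | Sum.elim (· ∈ y) (· ∈ y) e} \
      {e | Sum.elim (· ∈ y) (· ∈ x) e}, ccPol pol e = true := by
    rintro e ⟨he1, he2⟩
    cases e with
    | inl a => exact absurd he1 he2
    | inr a =>
      have hax : a ∉ x := he2
      exact hypos a ⟨he1, hax⟩
  have hsub2 : {e : A ⊕ A | Sum.elim (· ∈ y) (· ∈ x) e} ⊆ {e | Sum.elim (· ∈ y) (· ∈ z) e} := by
    intro e he; cases e with
    | inl a => exact he
    | inr a => exact hxz he
  have hU := h _ _ _ hYX hYY hYZ hsub1 hpos1 hsub2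
  have heq : {e : A ⊕ A | Sum.elim (· ∈ y) (· ∈ y) e} ∪ {e | Sum.elim (· ∈ y) (· ∈ z) e}
      = {e | Sum.elim (· ∈ y) (· ∈ (y ∪ z)) e} := by
    ext e; cases e with
    | inl a => simp [Set.mem_union]
    | inr a => simp [Set.mem_union]
  rw [heq] at hU
  constructor
  · intro X hX hXf
    apply hU.2.2 X _ hXf
    intro a ha
    exact hX ha
  · intro e e' hle he
    rcases he with he | he
    · exact Or.inl (hy.2 e e' hle he)
    · exact Or.inr (hz.2 e e' hle he)

end Stmt12Aux
namespace Stmt12Aux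

variable {A : Type} {S : ES A} {pol : A → Bool}

lemma det_finite (hrf : RaceFree S pol) :
    ∀ n : ℕ, ∀ X Y Z : Set (A ⊕ A), CCConfig S pol X → CCConfig S pol Y → CCConfig S pol Z →
      X ⊆ Y → (∀ e ∈ Y \ X, ccPol pol e = true) → X ⊆ Z →
      ∀ hf : (Z \ X).Finite, hf.toFinset.card ≤ n → CCConfig S pol (Y ∪ Z) := by
  classical
  intro n
  induction n with
  | zero =>
    intro X Y Z hX hY hZ hXY hpos hXZ hf hcard
    have hempty : Z \ X = ∅ := by
      have := Finset.card_eq_zero.mp (Nat.le_zero.mp hcard)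
      simpa [Set.Finite.toFinset_eq_empty] using this
    have hZX : Z ⊆ X := Set.diff_eq_empty.mp hempty
    rw [Set.union_eq_left.mpr (hZX.trans hXY)]
    exact hY
  | succ n ih =>
    intro X Y Z hX hY hZ hXY hpos hXZ hf hcard
    by_cases hZX : Z ⊆ X
    · rw [Set.union_eq_left.mpr (hZX.trans hXY)]; exact hY
    obtain ⟨e, he, hmax⟩ := exists_max (ccLe S pol)
      (fun a b c h1 h2 => h1.trans h2) (fun a b h1 h2 => ccLe_antisymm S pol h1 h2)
      (Z \ X) hf (Set.diff_nonempty.mpr hZX)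
    have heZ : e ∈ Z := he.1
    have heX : e ∉ X := he.2
    set Z' := Z \ {e} with hZ'def
    have hXZ' : X ⊆ Z' := by
      intro u hu
      refine ⟨hXZ hu, ?_⟩
      intro hue
      rw [Set.mem_singleton_iff] at hue
      subst hue
      exact heX hu
    have hZ'cc : CCConfig S pol Z' := by
      apply CCsubset hZ Set.diff_subset
      intro u v hle hv
      refine ⟨hZ.1 v u hle hv.1, ?_⟩
      intro hue
      rw [Set.mem_singleton_iff] at hue
      subst hue
      have hvZX : v ∈ Z \ X := ⟨hv.1, fun hvX => heX (hX.1 v u hle hvX)⟩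
      exact hv.2 (by rw [← hmax v hvZX hle]; exact rfl)
    have hf' : (Z' \ X).Finite := hf.subset (by intro u hu; exact ⟨hu.1.1, hu.2⟩)
    have htofin : hf'.toFinset = hf.toFinset.erase e := by
      ext u
      simp only [Set.Finite.mem_toFinset, Finset.mem_erase, hZ'def, Set.mem_diff,
        Set.mem_singleton_iff]
      tauto
    have hcard' : hf'.toFinset.card ≤ n := by
      rw [htofin, Finset.card_erase_of_mem (hf.mem_toFinset.mpr he)]
      omega
    have hW : CCConfig S pol (Y ∪ Z') := ih X Y Z' hX hY hZ'cc hXY hpos hXZ' hf' hcard'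
    have hYZeq : Y ∪ Z = (Y ∪ Z') ∪ {e} := by
      ext u
      simp only [Set.mem_union, hZ'def, Set.mem_diff, Set.mem_singleton_iff]
      constructor
      · rintro (h | h)
        · exact Or.inl (Or.inl h)
        · by_cases hu : u = e
          · exact Or.inr hu
          · exact Or.inl (Or.inr ⟨h, hu⟩)
      · rintro ((h | h) | rfl)
        · exact Or.inl h
        · exact Or.inr h.1
        · exact Or.inr heZ
    rw [hYZeq]
    by_cases heY : e ∈ Y
    · have hsube : ({e} : Set (A ⊕ A)) ⊆ Y ∪ Z' := by
        intro u hu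
        rw [Set.mem_singleton_iff] at hu
        subst hu
        exact Or.inl heY
      rw [Set.union_eq_left.mpr hsube]
      exact hW
    have hZ'W : Z' ⊆ Y ∪ Z' := Set.subset_union_right
    -- positivity facts about the components of W = Y ∪ Z'
    have hWpos2 : ∀ b, b ∈ comp2 (Y ∪ Z') → b ∉ comp2 Z' → pol b = true := by
      intro b hb hbz
      have hbY : Sum.inr b ∈ Y := by
        rcases hb with h | h
        · exact h
        · exact absurd h hbz
      have hbX : Sum.inr b ∉ X := fun hbX => hbz (hXZ' hbX)
      simpa [ccPol] using hpos _ ⟨hbY, hbX⟩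
    have hWneg1 : ∀ b, b ∈ comp1 (Y ∪ Z') → b ∉ comp1 Z' → pol b = false := by
      intro b hb hbz
      have hbY : Sum.inl b ∈ Y := by
        rcases hb with h | h
        · exact h
        · exact absurd h hbz
      have hbX : Sum.inl b ∉ X := fun hbX => hbz (hXZ' hbX)
      have := hpos _ ⟨hbY, hbX⟩
      simpa [ccPol] using this
    have hw1 : S.IsConfig (comp1 (Y ∪ Z')) := comp1_config hW
    have hw2 : S.IsConfig (comp2 (Y ∪ Z')) := comp2_config hW
    -- down-closure of (Y ∪ Z') ∪ {e}, common to all cases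
    have hdc : ∀ u v : A ⊕ A, ccLe S pol v u → u ∈ (Y ∪ Z') ∪ {e} →
        v ∈ (Y ∪ Z') ∪ {e} := by
      intro u v hle hu
      rcases hu with hu | hu
      · exact Or.inl (hW.1 u v hle hu)
      · rw [Set.mem_singleton_iff] at hu
        subst hu
        have hvZ : v ∈ Z := hZ.1 _ _ hle heZ
        by_cases hv : v = u
        · exact Or.inr (by rw [hv]; rfl)
        · exact Or.inl (Or.inr ⟨hvZ, by rwa [Set.mem_singleton_iff]⟩)
    cases e with
    | inr a =>
      have hkey : S.IsConfig (comp2 (Y ∪ Z') ∪ {a}) := by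
        by_cases hpa : pol a = true
        · -- CC-positive event on the right copy
          have hbarZ' : Sum.inl a ∈ Z' := by
            have hstep : ccLe S pol (Sum.inl a) (Sum.inr a) := by
              have := ccLe_bar S pol (e := Sum.inr a) (by simpa [ccPol] using hpa)
              simpa [bar] using this
            refine ⟨hZ.1 _ _ hstep heZ, ?_⟩
            simp
          have haw1 : a ∈ comp1 (Y ∪ Z') := Or.inr hbarZ'
          set q0 : Set A := comp1 (Y ∪ Z') ∩ comp2 (Y ∪ Z') with hq0def
          have hq0 : S.IsConfig q0 := inter_config hw1 hw2
          have hq : S.IsConfig (q0 ∪ {a}) := by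
            constructor
            · intro F hF hFf
              apply hw1.1 F ?_ hFf
              intro b hb
              rcases hF hb with h | h
              · exact h.1
              · rw [Set.mem_singleton_iff] at h; subst h; exact haw1
            · intro c b hle hc
              rcases hc with hc | hc
              · exact Or.inl ⟨hw1.2 c b hle hc.1, hw2.2 c b hle hc.2⟩
              · rw [Set.mem_singleton_iff] at hc
                subst hc
                by_cases hb : b = c
                · exact Or.inr (by rw [hb]; rfl)
                · refine Or.inl ⟨?_, ?_⟩
                  · exact Or.inr (hZ'cc.1 _ _ (ccLe_inl S pol hle) hbarZ')
                  · have hbz : Sum.inr b ∈ Z := hZ.1 _ _ (ccLe_inr S pol hle) heZ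
                    exact Or.inr ⟨hbz, by intro h; rw [Set.mem_singleton_iff] at h; exact hb (Sum.inr.inj h)⟩
          have hres := hrf q0 (q0 ∪ {a}) (comp2 (Y ∪ Z')) hq0 hq hw2
            Set.subset_union_left
            (by
              rintro b ⟨hb, hbq⟩
              rcases hb with h | h
              · exact absurd h hbq
              · rw [Set.mem_singleton_iff] at h; subst h; exact hpa)
            Set.inter_subset_right
            (by
              rintro b ⟨hb, hbq⟩
              cases hpb : pol b
              · rfl
              · exact absurd ⟨cross2 hW hb hpb, hb⟩ hbq)
          have huni : q0 ∪ {a} ∪ comp2 (Y ∪ Z') = comp2 (Y ∪ Z') ∪ {a} := by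
            ext b
            constructor
            · rintro ((h | h) | h)
              · exact Or.inl h.2
              · exact Or.inr h
              · exact Or.inl h
            · rintro (h | h)
              · exact Or.inr h
              · exact Or.inl (Or.inr h)
          rwa [huni] at hres
        · -- CC-negative event on the right copy
          have hpa' : pol a = false := by
            cases h : pol a
            · rfl
            · exact absurd h hpa
          have hz2eq : comp2 Z = comp2 Z' ∪ {a} := by
            ext b
            constructor
            · intro hb
              by_cases hba : b = a
              · exact Or.inr (by rw [hba]; rfl)
              · exact Or.inl ⟨hb, by intro h; rw [Set.mem_singleton_iff] at h; exact hba (Sum.inr.inj h)⟩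
            · rintro (hb | hb)
              · exact hb.1
              · rw [Set.mem_singleton_iff] at hb; subst hb; exact heZ
          have hres := hrf (comp2 Z') (comp2 (Y ∪ Z')) (comp2 Z)
            (comp2_config hZ'cc) hw2 (comp2_config hZ)
            (fun b hb => Or.inr hb)
            (fun b hb => hWpos2 b hb.1 hb.2)
            (fun b hb => hb.1)
            (by
              rintro b ⟨hb, hbz⟩
              rw [hz2eq] at hb
              rcases hb with h | h
              · exact absurd h hbz
              · rw [Set.mem_singleton_iff] at h; subst h; exact hpa')
          have : comp2 (Y ∪ Z') ∪ comp2 Z = comp2 (Y ∪ Z') ∪ {a} := by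
            rw [hz2eq]
            ext b
            simp only [Set.mem_union, Set.mem_singleton_iff]
            constructor
            · rintro (h | h | h)
              · exact Or.inl h
              · exact Or.inl (Or.inr h)
              · exact Or.inr h
            · rintro (h | h)
              · exact Or.inl h
              · exact Or.inr (Or.inr h)
          rwa [this] at hres
      refine ⟨hdc, ?_, ?_⟩
      · intro F hF hFf
        apply hw1.1 F ?_ hFf
        intro b hb
        rcases hF hb with h | h
        · exact h
        · rw [Set.mem_singleton_iff] at h; exact absurd h (by simp)
      · intro F hF hFf
        apply hkey.1 F ?_ hFf
        intro b hb
        rcases hF hb with h | h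
        · exact Or.inl h
        · rw [Set.mem_singleton_iff] at h
          exact Or.inr (by rw [Set.mem_singleton_iff]; exact Sum.inr.inj h)
    | inl a =>
      have hkey : S.IsConfig (comp1 (Y ∪ Z') ∪ {a}) := by
        by_cases hpa : pol a = false
        · -- CC-positive event on the left copy
          have hbarZ' : Sum.inr a ∈ Z' := by
            have hstep : ccLe S pol (Sum.inr a) (Sum.inl a) := by
              have := ccLe_bar S pol (e := Sum.inl a) (by simp [ccPol, hpa])
              simpa [bar] using this
            refine ⟨hZ.1 _ _ hstep heZ, ?_⟩
            simp
          have haw2 : a ∈ comp2 (Y ∪ Z') := Or.inr hbarZ'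
          set q0 : Set A := comp1 (Y ∪ Z') ∩ comp2 (Y ∪ Z') with hq0def
          have hq0 : S.IsConfig q0 := inter_config hw1 hw2
          have hq : S.IsConfig (q0 ∪ {a}) := by
            constructor
            · intro F hF hFf
              apply hw2.1 F ?_ hFf
              intro b hb
              rcases hF hb with h | h
              · exact h.2
              · rw [Set.mem_singleton_iff] at h; subst h; exact haw2
            · intro c b hle hc
              rcases hc with hc | hc
              · exact Or.inl ⟨hw1.2 c b hle hc.1, hw2.2 c b hle hc.2⟩
              · rw [Set.mem_singleton_iff] at hc
                subst hc
                by_cases hb : b = c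
                · exact Or.inr (by rw [hb]; rfl)
                · refine Or.inl ⟨?_, ?_⟩
                  · have hbz : Sum.inl b ∈ Z := hZ.1 _ _ (ccLe_inl S pol hle) heZ
                    exact Or.inr ⟨hbz, by intro h; rw [Set.mem_singleton_iff] at h; exact hb (Sum.inl.inj h)⟩
                  · exact Or.inr (hZ'cc.1 _ _ (ccLe_inr S pol hle) hbarZ')
          have hres := hrf q0 (comp1 (Y ∪ Z')) (q0 ∪ {a}) hq0 hw1 hq
            Set.inter_subset_left
            (by
              rintro b ⟨hb, hbq⟩
              cases hpb : pol b
              · exact absurd ⟨hb, cross1 hW hb hpb⟩ hbq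
              · rfl)
            Set.subset_union_left
            (by
              rintro b ⟨hb, hbq⟩
              rcases hb with h | h
              · exact absurd h hbq
              · rw [Set.mem_singleton_iff] at h; subst h; exact hpa)
          have huni : comp1 (Y ∪ Z') ∪ (q0 ∪ {a}) = comp1 (Y ∪ Z') ∪ {a} := by
            ext b
            constructor
            · rintro (h | (h | h))
              · exact Or.inl h
              · exact Or.inl h.1
              · exact Or.inr h
            · rintro (h | h)
              · exact Or.inl h
              · exact Or.inr (Or.inr h)
          rwa [huni] at hres
        · -- CC-negative event on the left copy
          have hpa' : pol a = true := by
            cases h : pol a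
            · exact absurd h hpa
            · rfl
          have hz1eq : comp1 Z = comp1 Z' ∪ {a} := by
            ext b
            constructor
            · intro hb
              by_cases hba : b = a
              · exact Or.inr (by rw [hba]; rfl)
              · exact Or.inl ⟨hb, by intro h; rw [Set.mem_singleton_iff] at h; exact hba (Sum.inl.inj h)⟩
            · rintro (hb | hb)
              · exact hb.1
              · rw [Set.mem_singleton_iff] at hb; subst hb; exact heZ
          have hres := hrf (comp1 Z') (comp1 Z) (comp1 (Y ∪ Z'))
            (comp1_config hZ'cc) (comp1_config hZ) hw1
            (fun b hb => hz1eq ▸ Or.inl hb)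
            (by
              rintro b ⟨hb, hbz⟩
              rw [hz1eq] at hb
              rcases hb with h | h
              · exact absurd h hbz
              · rw [Set.mem_singleton_iff] at h; subst h; exact hpa')
            (fun b hb => hZ'W hb)
            (fun b hb => hWneg1 b hb.1 hb.2)
          have : comp1 Z ∪ comp1 (Y ∪ Z') = comp1 (Y ∪ Z') ∪ {a} := by
            rw [hz1eq]
            ext b
            simp only [Set.mem_union, Set.mem_singleton_iff]
            constructor
            · rintro ((h | h) | h)
              · exact Or.inl (Or.inr h)
              · exact Or.inr h
              · exact Or.inl h
            · rintro (h | h)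
              · exact Or.inr h
              · exact Or.inl (Or.inr h)
          rwa [this] at hres
      refine ⟨hdc, ?_, ?_⟩
      · intro F hF hFf
        apply hkey.1 F ?_ hFf
        intro b hb
        rcases hF hb with h | h
        · exact Or.inl h
        · rw [Set.mem_singleton_iff] at h
          exact Or.inr (by rw [Set.mem_singleton_iff]; exact Sum.inl.inj h)
      · intro F hF hFf
        apply hw2.1 F ?_ hFf
        intro b hb
        rcases hF hb with h | h
        · exact h
        · rw [Set.mem_singleton_iff] at h; exact absurd h (by simp)

end Stmt12Aux
namespace Stmt12Aux

variable {A : Type} {S : ES A} {pol : A → Bool}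

lemma racefree_to_det (hrf : RaceFree S pol) : CCDeterministic S pol := by
  intro X Y Z hX hY hZ hXY hpos hXZ
  have cover : ∀ G : Set (A ⊕ A), G.Finite → G ⊆ Y ∪ Z →
      ∃ U, CCConfig S pol U ∧ G ⊆ U ∧ U ⊆ Y ∪ Z := by
    intro G hGfin hGYZ
    set DY : Set (A ⊕ A) := {u | ∃ g ∈ G ∩ Y, ccLe S pol u g} with hDYdef
    set DZ : Set (A ⊕ A) := {u | ∃ g ∈ G \ Y, ccLe S pol u g} with hDZdef
    have hDYfin : DY.Finite := by
      have : DY = ⋃ g ∈ G ∩ Y, {u | ccLe S pol u g} := by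
        ext u; simp [hDYdef]
      rw [this]
      exact Set.Finite.biUnion (hGfin.subset Set.inter_subset_left)
        (fun g _ => ccLe_preds_finite S pol g)
    have hDZfin : DZ.Finite := by
      have : DZ = ⋃ g ∈ G \ Y, {u | ccLe S pol u g} := by
        ext u; simp [hDZdef]
      rw [this]
      exact Set.Finite.biUnion (hGfin.subset Set.diff_subset)
        (fun g _ => ccLe_preds_finite S pol g)
    have hDYdc : ∀ u v : A ⊕ A, ccLe S pol u v → v ∈ DY → u ∈ DY := by
      rintro u v hle ⟨g, hg, hvg⟩
      exact ⟨g, hg, hle.trans hvg⟩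
    have hDZdc : ∀ u v : A ⊕ A, ccLe S pol u v → v ∈ DZ → u ∈ DZ := by
      rintro u v hle ⟨g, hg, hvg⟩
      exact ⟨g, hg, hle.trans hvg⟩
    have hDYY : DY ⊆ Y := by
      rintro u ⟨g, hg, hug⟩
      exact hY.1 g u hug hg.2
    have hDZZ : DZ ⊆ Z := by
      rintro u ⟨g, hg, hug⟩
      have hgZ : g ∈ Z := by
        rcases hGYZ hg.1 with h | h
        · exact absurd h hg.2
        · exact h
      exact hZ.1 g u hug hgZ
    set X0 : Set (A ⊕ A) := X ∩ (DY ∪ DZ) with hX0def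
    set Y0 : Set (A ⊕ A) := DY ∪ X0 with hY0def
    set Z0 : Set (A ⊕ A) := DZ ∪ X0 with hZ0def
    have hX0cc : CCConfig S pol X0 := by
      apply CCsubset hX Set.inter_subset_left
      intro u v hle hv
      refine ⟨hX.1 v u hle hv.1, ?_⟩
      rcases hv.2 with h | h
      · exact Or.inl (hDYdc u v hle h)
      · exact Or.inr (hDZdc u v hle h)
    have hY0cc : CCConfig S pol Y0 := by
      apply CCsubset hY
      · intro u hu
        rcases hu with h | h
        · exact hDYY h
        · exact hXY h.1
      · intro u v hle hv
        rcases hv with h | h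
        · exact Or.inl (hDYdc u v hle h)
        · exact Or.inr ⟨hX.1 v u hle h.1, by
            rcases h.2 with h' | h'
            · exact Or.inl (hDYdc u v hle h')
            · exact Or.inr (hDZdc u v hle h')⟩
    have hZ0cc : CCConfig S pol Z0 := by
      apply CCsubset hZ
      · intro u hu
        rcases hu with h | h
        · exact hDZZ h
        · exact hXZ h.1
      · intro u v hle hv
        rcases hv with h | h
        · exact Or.inl (hDZdc u v hle h)
        · exact Or.inr ⟨hX.1 v u hle h.1, by
            rcases h.2 with h' | h'
            · exact Or.inl (hDYdc u v hle h')
            · exact Or.inr (hDZdc u v hle h')⟩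
    have hX0Y0 : X0 ⊆ Y0 := Set.subset_union_right
    have hX0Z0 : X0 ⊆ Z0 := Set.subset_union_right
    have hY0pos : ∀ u ∈ Y0 \ X0, ccPol pol u = true := by
      rintro u ⟨hu, hux⟩
      have huX : u ∉ X := by
        intro huX
        rcases hu with h | h
        · exact hux ⟨huX, Or.inl h⟩
        · exact hux h
      have huY : u ∈ Y := by
        rcases hu with h | h
        · exact hDYY h
        · exact hXY h.1
      exact hpos u ⟨huY, huX⟩
    have hfin : (Z0 \ X0).Finite := by
      apply Set.Finite.subset (hDZfin.union (hDYfin.union hDZfin))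
      rintro u ⟨hu, _⟩
      rcases hu with h | h
      · exact Or.inl h
      · exact Or.inr h.2
    have hU := det_finite hrf hfin.toFinset.card X0 Y0 Z0 hX0cc hY0cc hZ0cc
      hX0Y0 hY0pos hX0Z0 hfin le_rfl
    refine ⟨Y0 ∪ Z0, hU, ?_, ?_⟩
    · intro g hg
      by_cases hgY : g ∈ Y
      · exact Or.inl (Or.inl ⟨g, ⟨hg, hgY⟩, Relation.ReflTransGen.refl⟩)
      · exact Or.inr (Or.inl ⟨g, ⟨hg, hgY⟩, Relation.ReflTransGen.refl⟩)
    · intro u hu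
      rcases hu with (h | h) | (h | h)
      · exact Or.inl (hDYY h)
      · exact Or.inl (hXY h.1)
      · exact Or.inr (hDZZ h)
      · exact Or.inl (hXY h.1)
  refine ⟨?_, ?_, ?_⟩
  · intro u v hle hu
    rcases hu with h | h
    · exact Or.inl (hY.1 u v hle h)
    · exact Or.inr (hZ.1 u v hle h)
  · intro F hF hFfin
    obtain ⟨U, hUcc, hGU, _⟩ := cover (Sum.inl '' F) (hFfin.image _)
      (by rintro u ⟨b, hb, rfl⟩; exact hF hb)
    apply hUcc.2.1 F ?_ hFfin
    intro b hb
    exact hGU ⟨b, hb, rfl⟩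
  · intro F hF hFfin
    obtain ⟨U, hUcc, hGU, _⟩ := cover (Sum.inr '' F) (hFfin.image _)
      (by rintro u ⟨b, hb, rfl⟩; exact hF hb)
    apply hUcc.2.2 F ?_ hFfin
    intro b hb
    exact hGU ⟨b, hb, rfl⟩

end Stmt12Aux


/-- copycat `CC_A` is deterministic iff the game `A` is
race-free. -/
theorem stmt12 {A : Type} (S : ES A) (pol : A → Bool) :
    RaceFree S pol ↔ CCDeterministic S pol :=
  ⟨Stmt12Aux.racefree_to_det, Stmt12Aux.det_to_racefree⟩
end

section
/- Every countable configuration of an event structure admits a serialisation: if x is a countable configuration of S, then there is an enumeration x = {s₁, s₂, …, sₙ, …} such that each initial segment {s₁, …, sᵢ} is a finite configuration of S. -/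
open scoped Classical


lemma ES.subconfig {E : Type} (S : ES E) {x y : Set E} (hx : S.IsConfig x) (hxy : y ⊆ x)
    (hdc : ∀ e e', S.le e' e → e ∈ y → e' ∈ y) : S.IsConfig y :=
  ⟨fun X hX hF => hx.1 X (hX.trans hxy) hF, hdc⟩

lemma ES.empty_config {E : Type} (S : ES E) : S.IsConfig ∅ := by
  obtain ⟨X, hX⟩ := S.con_nonempty
  exact ⟨fun Y hY _ => by
    rw [Set.subset_empty_iff.mp hY]
    exact S.con_mono X ∅ (Set.empty_subset X) hX,
    fun e e' _ h => absurd h (Set.notMem_empty e)⟩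

lemma ES.exists_min {E : Type} (S : ES E) {s : Finset E} (hs : s.Nonempty) :
    ∃ m ∈ s, ∀ e ∈ s, S.le e m → e = m := by
  obtain ⟨m, hm, hmin⟩ :=
    Finset.exists_min_image s (fun e => (s.filter (fun e' => S.le e' e)).card) hs
  refine ⟨m, hm, fun e he hle => ?_⟩
  by_contra hne
  have hsub : s.filter (fun e' => S.le e' e) ⊆ s.filter (fun e' => S.le e' m) := by
    intro a ha
    simp only [Finset.mem_filter] at *
    exact ⟨ha.1, S.le_trans _ _ _ ha.2 hle⟩
  have hm_mem : m ∈ s.filter (fun e' => S.le e' m) := by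
    simp [hm, S.le_refl]
  have hm_nmem : m ∉ s.filter (fun e' => S.le e' e) := by
    simp only [Finset.mem_filter, not_and]
    intro _ hle2
    exact hne (S.le_antisymm _ _ hle hle2)
  have hlt : (s.filter (fun e' => S.le e' e)).card < (s.filter (fun e' => S.le e' m)).card :=
    Finset.card_lt_card ((Finset.ssubset_iff_of_subset hsub).mpr ⟨m, hm_mem, hm_nmem⟩)
  exact absurd (hmin e he) (not_le.mpr hlt)

lemma ES.exists_max {E : Type} (S : ES E) {s : Finset E} (hs : s.Nonempty) :
    ∃ m ∈ s, ∀ e ∈ s, S.le m e → e = m := by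
  obtain ⟨m, hm, hmin⟩ :=
    Finset.exists_min_image s (fun e => (s.filter (fun e' => S.le e e')).card) hs
  refine ⟨m, hm, fun e he hle => ?_⟩
  by_contra hne
  have hsub : s.filter (fun e' => S.le e e') ⊆ s.filter (fun e' => S.le m e') := by
    intro a ha
    simp only [Finset.mem_filter] at *
    exact ⟨ha.1, S.le_trans _ _ _ hle ha.2⟩
  have hm_mem : m ∈ s.filter (fun e' => S.le m e') := by
    simp [hm, S.le_refl]
  have hm_nmem : m ∉ s.filter (fun e' => S.le e e') := by
    simp only [Finset.mem_filter, not_and]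
    intro _ hle2
    exact hne (S.le_antisymm _ _ hle2 hle)
  have hlt : (s.filter (fun e' => S.le e e')).card < (s.filter (fun e' => S.le m e')).card :=
    Finset.card_lt_card ((Finset.ssubset_iff_of_subset hsub).mpr ⟨m, hm_mem, hm_nmem⟩)
  exact absurd (hmin e he) (not_le.mpr hlt)

lemma ES.fin_ser {E : Type} (S : ES E) : ∀ (n : ℕ) (s : Finset E), s.card = n → S.IsConfig ↑s →
    ∃ l : List E, l.Nodup ∧ {e | e ∈ l} = ↑s ∧ ∀ k : ℕ, S.IsConfig {e | e ∈ l.take k} := by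
  intro n
  induction n with
  | zero =>
    intro s hcard hs
    refine ⟨[], List.nodup_nil, ?_, ?_⟩
    · rw [Finset.card_eq_zero.mp hcard]; simp
    · intro k; simpa using S.empty_config
  | succ n ih =>
    intro s hcard hs
    have hsne : s.Nonempty := Finset.card_pos.mp (by omega)
    obtain ⟨m, hm, hmax⟩ := S.exists_max hsne
    have hcard' : (s.erase m).card = n := by
      rw [Finset.card_erase_of_mem hm]; omega
    have hconf' : S.IsConfig ↑(s.erase m) := by
      refine S.subconfig hs (by exact_mod_cast Finset.erase_subset m s) ?_
      intro e e' hle he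
      simp only [Finset.coe_erase, Set.mem_diff, Set.mem_singleton_iff] at he ⊢
      refine ⟨hs.2 e e' hle he.1, ?_⟩
      intro hem
      subst hem
      exact he.2 (hmax e he.1 hle)
    obtain ⟨l', hnd', hset', htake'⟩ := ih (s.erase m) hcard' hconf'
    have hmnl : m ∉ l' := by
      intro hmem
      have : m ∈ ({e | e ∈ l'} : Set E) := hmem
      rw [hset'] at this
      simp at this
    refine ⟨l' ++ [m], ?_, ?_, ?_⟩
    · simp [List.nodup_append, hnd', hmnl]
      rintro a ha rfl
      exact hmnl ha
    · ext e
      simp only [Set.mem_setOf_eq, List.mem_append, List.mem_singleton]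
      constructor
      · rintro (h | rfl)
        · have : e ∈ ({e | e ∈ l'} : Set E) := h
          rw [hset'] at this
          exact_mod_cast Finset.mem_of_mem_erase (by exact_mod_cast this)
        · exact hm
      · intro he
        by_cases hem : e = m
        · exact Or.inr hem
        · left
          show e ∈ ({e | e ∈ l'} : Set E)
          rw [hset']
          exact_mod_cast Finset.mem_erase.mpr ⟨hem, he⟩
    · intro k
      rcases le_or_gt k l'.length with hk | hk
      · have : (l' ++ [m]).take k = l'.take k := by
          rw [List.take_append]
          have h0 : k - l'.length = 0 := by omega
          simp [h0]
        rw [this]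
        exact htake' k
      · have : (l' ++ [m]).take k = l' ++ [m] := by
          apply List.take_of_length_le
          simp; omega
        rw [this]
        have hseteq : {e | e ∈ l' ++ [m]} = (↑s : Set E) := by
          ext e
          simp only [Set.mem_setOf_eq, List.mem_append, List.mem_singleton]
          constructor
          · rintro (h | rfl)
            · have : e ∈ ({e | e ∈ l'} : Set E) := h
              rw [hset'] at this
              exact_mod_cast Finset.mem_of_mem_erase (by exact_mod_cast this)
            · exact hm
          · intro he
            by_cases hem : e = m
            · exact Or.inr hem
            · left
              show e ∈ ({e | e ∈ l'} : Set E)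
              rw [hset']
              exact_mod_cast Finset.mem_erase.mpr ⟨hem, he⟩
        rw [hseteq]
        exact hs

/-- every countable configuration admits a serialisation: an
enumeration of its events (a duplicate-free list when finite, an injective
sequence when infinite) all of whose finite initial segments are
configurations. -/
theorem stmt13 {E : Type} (S : ES E) (x : Set E)
    (hx : S.IsConfig x) (hc : x.Countable) :
    (x.Finite →
      ∃ l : List E, l.Nodup ∧ {e | e ∈ l} = x ∧
        ∀ n : ℕ, S.IsConfig {e | e ∈ l.take n}) ∧
    (x.Infinite →
      ∃ f : ℕ → E, Function.Injective f ∧ Set.range f = x ∧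
        ∀ n : ℕ, S.IsConfig (f '' {i | i < n})) := by
  constructor
  · -- finite case
    intro hfin
    obtain ⟨l, h1, h2, h3⟩ := S.fin_ser hfin.toFinset.card hfin.toFinset rfl
      (by rwa [Set.Finite.coe_toFinset])
    exact ⟨l, h1, by rwa [Set.Finite.coe_toFinset] at h2, h3⟩
  · -- infinite case
    intro hinf
    obtain ⟨g, hg⟩ := hc.exists_eq_range hinf.nonempty
    -- every finite set misses some g k
    have hmiss : ∀ y : Finset E, ∃ k, g k ∉ y := by
      intro y
      obtain ⟨a, hax, hay⟩ := hinf.exists_notMem_finset y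
      rw [hg] at hax
      obtain ⟨k, rfl⟩ := hax
      exact ⟨k, hay⟩
    set P : Finset E → Prop :=
      fun y => ↑y ⊆ x ∧ ∀ e ∈ y, ∀ e', S.le e' e → e' ∈ y with hP
    -- one-step extension
    have step : ∀ y : Finset E, ∃ m : E, P y →
        m ∉ y ∧ m ∈ x ∧ S.le m (g (Nat.find (hmiss y))) ∧
        ∀ e', S.le e' m → e' = m ∨ e' ∈ y := by
      intro y
      by_cases hy : P y
      · set k := Nat.find (hmiss y) with hk
        set T : Finset E := (S.finitary (g k)).toFinset \ y with hT
        have hmemT : ∀ e, e ∈ T ↔ S.le e (g k) ∧ e ∉ y := by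
          intro e
          simp [hT, Set.Finite.mem_toFinset]
        have hTne : T.Nonempty :=
          ⟨g k, (hmemT _).mpr ⟨S.le_refl _, Nat.find_spec (hmiss y)⟩⟩
        obtain ⟨m, hmT, hmmin⟩ := S.exists_min hTne
        obtain ⟨hmle, hmny⟩ := (hmemT m).mp hmT
        have hgkx : g k ∈ x := by rw [hg]; exact Set.mem_range_self k
        refine ⟨m, fun _ => ⟨hmny, hx.2 _ _ hmle hgkx, hmle, ?_⟩⟩
        intro e' hle
        by_cases he'y : e' ∈ y
        · exact Or.inr he'y
        · left
          have he'T : e' ∈ T := (hmemT _).mpr ⟨S.le_trans _ _ _ hle hmle, he'y⟩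
          exact hmmin e' he'T hle
      · exact ⟨g 0, fun h => absurd h hy⟩
    choose m hm using step
    set c : ℕ → Finset E := fun n => (fun y => insert (m y) y)^[n] ∅ with hcdef
    have hc0 : c 0 = ∅ := rfl
    have hcsucc : ∀ n, c (n + 1) = insert (m (c n)) (c n) := by
      intro n
      simp only [hcdef, Function.iterate_succ_apply']
    set f : ℕ → E := fun n => m (c n) with hfdef
    -- all c n satisfy P
    have hPc : ∀ n, P (c n) := by
      intro n
      induction n with
      | zero =>
        rw [hc0]
        exact ⟨by simp, by simp⟩
      | succ n ihn =>
        obtain ⟨h1, h2, h3, h4⟩ := hm (c n) ihn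
        rw [hcsucc n]
        constructor
        · intro e he
          rcases Finset.mem_insert.mp he with rfl | he
          · exact h2
          · exact ihn.1 he
        · intro e he e' hle
          rcases Finset.mem_insert.mp he with rfl | he
          · rcases h4 e' hle with rfl | h
            · exact Finset.mem_insert_self _ _
            · exact Finset.mem_insert_of_mem h
          · exact Finset.mem_insert_of_mem (ihn.2 e he e' hle)
    have hfprop : ∀ n, f n ∉ c n ∧ f n ∈ x ∧ S.le (f n) (g (Nat.find (hmiss (c n)))) :=
      fun n => ⟨(hm (c n) (hPc n)).1, (hm (c n) (hPc n)).2.1, (hm (c n) (hPc n)).2.2.1⟩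
    have hcmono : ∀ {a b : ℕ}, a ≤ b → c a ⊆ c b := by
      intro a b hab
      induction b with
      | zero => rw [Nat.le_zero.mp hab]
      | succ b ihb =>
        rcases Nat.lt_or_ge a (b + 1) with h | h
        · rw [hcsucc b]
          exact (ihb (by omega)).trans (Finset.subset_insert _ _)
        · rw [Nat.le_antisymm hab h]
    have hfc : ∀ n, f n ∈ c (n + 1) := by
      intro n
      rw [hcsucc n]
      exact Finset.mem_insert_self _ _
    -- injectivity
    have hinj : Function.Injective f := by
      intro a b hab
      by_contra hne
      rcases Nat.lt_or_ge a b with h | h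
      · have : f a ∈ c b := hcmono (Nat.succ_le_of_lt h) (hfc a)
        rw [hab] at this
        exact (hfprop b).1 this
      · have h' : b < a := by omega
        have : f b ∈ c a := hcmono (Nat.succ_le_of_lt h') (hfc b)
        rw [← hab] at this
        exact (hfprop a).1 this
    -- c n is the image of the first n values
    have hcim : ∀ n, (↑(c n) : Set E) = f '' {i | i < n} := by
      intro n
      induction n with
      | zero =>
        rw [hc0]
        simp
      | succ n ihn =>
        rw [hcsucc n]
        have : {i | i < n + 1} = insert n {i | i < n} := by
          ext i; simp; omega
        rw [this, Set.image_insert_eq, Finset.coe_insert, ihn]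
    -- progress: every g k eventually appears
    have hprog : ∀ k, ∃ n, g k ∈ c n := by
      intro k
      by_contra hcon
      push_neg at hcon
      set D : ℕ → ℕ → ℕ := fun j n => ((S.finitary (g j)).toFinset \ c n).card with hD
      set M : ℕ → ℕ := fun n => ∑ j ∈ Finset.range (k + 1), D j n with hM
      have hMdec : ∀ n, M (n + 1) < M n := by
        intro n
        set j0 := Nat.find (hmiss (c n)) with hj0
        have hj0le : j0 ≤ k := Nat.find_le (hcon n)
        apply Finset.sum_lt_sum
        · intro j _
          apply Finset.card_le_card
          apply Finset.sdiff_subset_sdiff (subset_refl _)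
          exact hcmono (Nat.le_succ n)
        · refine ⟨j0, Finset.mem_range.mpr (by omega), ?_⟩
          apply Finset.card_lt_card
          rw [Finset.ssubset_iff_of_subset
            (Finset.sdiff_subset_sdiff (subset_refl _) (hcmono (Nat.le_succ n)))]
          refine ⟨f n, ?_, ?_⟩
          · rw [Finset.mem_sdiff, Set.Finite.mem_toFinset]
            exact ⟨(hfprop n).2.2, (hfprop n).1⟩
          · rw [Finset.mem_sdiff]
            intro ⟨_, hnot⟩
            exact hnot (hfc n)
      have hMbd : ∀ n, M n + n ≤ M 0 := by
        intro n
        induction n with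
        | zero => simp
        | succ n ihn =>
          have := hMdec n
          omega
      have := hMbd (M 0 + 1)
      omega
    refine ⟨f, hinj, ?_, ?_⟩
    · apply Set.Subset.antisymm
      · rintro e ⟨n, rfl⟩
        exact (hfprop n).2.1
      · intro e he
        rw [hg] at he
        obtain ⟨k, rfl⟩ := he
        obtain ⟨n, hn⟩ := hprog k
        have : g k ∈ (↑(c n) : Set E) := hn
        rw [hcim n] at this
        exact Set.image_subset_range f _ this
    · intro n
      rw [← hcim n]
      exact S.subconfig hx (hPc n).1 (fun e e' hle he => (hPc n).2 e he e' hle)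
end
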